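/- Under the Kähler identities, the ∂∂̄-Lemma holds: ker ∂ ∩ ker ∂̄ ∩ (im ∂ + im ∂̄) = im(∂∘∂̄). In particular, if x ∈ V satisfies ∂x = 0, ∂̄x = 0 and x = ∂β + ∂̄γ for some β, γ ∈ V, then x = ∂∂̄u for some u ∈ V. -/

import Mathlib

/-!
Write `p = ∂` and `q = ∂̄`. The Kähler identities make `∂` anticommute with `∂̄*` and show that
the Laplacians `∂∂* + ∂*∂` and `∂̄∂̄* + ∂̄*∂̄` agree; this common `Δ` commutes with `∂` and `∂̄`,
and its kernel lies in `ker ∂ ∩ ker ∂̄`. As `Δ` is self-adjoint, `V = ker Δ ⊕ im Δ`.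
If `∂̄∂β = 0`, write `β = h + Δy` with `Δh = 0`; then
`∂β = ∂Δy = ∂∂̄∂̄*y - ∂̄*∂∂̄y`, and `∂∂̄y` is harmonic because `Δ∂∂̄y = ∂∂̄β = 0`, so
`∂β = ∂∂̄(∂̄*y)`. The identities are symmetric under `(∂, ∂̄, Λ) ↦ (∂̄, ∂, -Λ)`, so likewise
a `∂`-closed `∂̄γ` is `∂̄∂ = -∂∂̄`-exact, and `∂β + ∂̄γ` is `∂∂̄`-exact when it is `∂`- and
`∂̄`-closed.
-/

open LinearMap

namespace LinearMap

variable {𝕜 V : Type*} [RCLike 𝕜] [NormedAddCommGroup V] [InnerProductSpace 𝕜 V]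
  [FiniteDimensional 𝕜 V]

noncomputable def laplacian (a : V →ₗ[𝕜] V) : V →ₗ[𝕜] V := a * adjoint a + adjoint a * a

theorem isSymmetric_laplacian (a : V →ₗ[𝕜] V) : (laplacian a).IsSymmetric := by
  have h := isSymmetric_adjoint_mul_self (adjoint a)
  rw [adjoint_adjoint] at h
  exact h.add (isSymmetric_adjoint_mul_self a)

theorem re_inner_laplacian_apply_self (a : V →ₗ[𝕜] V) (x : V) :
    RCLike.re (inner 𝕜 (laplacian a x) x) = ‖adjoint a x‖ ^ 2 + ‖a x‖ ^ 2 := by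
  rw [laplacian, add_apply, Module.End.mul_apply, Module.End.mul_apply, inner_add_left,
    ← adjoint_inner_right a (adjoint a x) x, adjoint_inner_left a x (a x), map_add,
    inner_self_eq_norm_sq, inner_self_eq_norm_sq]

theorem laplacian_apply_eq_zero_iff (a : V →ₗ[𝕜] V) (x : V) :
    laplacian a x = 0 ↔ a x = 0 ∧ adjoint a x = 0 := by
  refine ⟨fun hx => ?_, fun ⟨h₁, h₂⟩ => by simp [laplacian, h₁, h₂]⟩
  have hnorm := re_inner_laplacian_apply_self a x
  rw [hx, inner_zero_left, map_zero] at hnorm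
  constructor <;> rw [← norm_eq_zero] <;> nlinarith [sq_nonneg ‖a x‖, sq_nonneg ‖adjoint a x‖]

theorem commute_laplacian_self {a : V →ₗ[𝕜] V} (ha : a * a = 0) : Commute (laplacian a) a := by
  calc laplacian a * a = a * adjoint a * a + adjoint a * (a * a) := by
        simp only [laplacian, add_mul, mul_assoc]
    _ = (a * a) * adjoint a + a * (adjoint a * a) := by rw [ha]; simp [mul_assoc]
    _ = a * laplacian a := by simp only [laplacian, mul_add, mul_assoc]

theorem IsSymmetric.exists_mem_ker_add_apply {T : V →ₗ[𝕜] V} (hT : T.IsSymmetric) (v : V) :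
    ∃ v₀ ∈ ker T, ∃ y, v = v₀ + T y := by
  obtain ⟨_, ⟨y, rfl⟩, v₀, hv₀, rfl⟩ := (range T).exists_add_mem_mem_orthogonal v
  exact ⟨v₀, hT.orthogonal_range ▸ hv₀, y, add_comm _ _⟩

end LinearMap

section Kahler

open Complex

variable {V : Type*} [NormedAddCommGroup V] [InnerProductSpace ℂ V] [FiniteDimensional ℂ V]

structure IsKahlerTriple (p q Λ : V →ₗ[ℂ] V) : Prop where
  mul_self_fst : p * p = 0
  mul_self_snd : q * q = 0
  anticomm : p * q + q * p = 0
  kahler_fst : Λ * p - p * Λ = I • adjoint q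
  kahler_snd : Λ * q - q * Λ = (-I) • adjoint p

namespace IsKahlerTriple

variable {p q Λ : V →ₗ[ℂ] V}

theorem swap (h : IsKahlerTriple p q Λ) : IsKahlerTriple q p (-Λ) where
  mul_self_fst := h.mul_self_snd
  mul_self_snd := h.mul_self_fst
  anticomm := by rw [add_comm, h.anticomm]
  kahler_fst := by rw [← neg_neg (I • adjoint p), ← neg_smul, ← h.kahler_snd]; noncomm_ring
  kahler_snd := by rw [neg_smul, ← h.kahler_fst]; noncomm_ring

theorem snd_mul_fst (h : IsKahlerTriple p q Λ) : q * p = -(p * q) :=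
  eq_neg_of_add_eq_zero_right h.anticomm

theorem snd_fst_apply (h : IsKahlerTriple p q Λ) (x : V) : q (p x) = -p (q x) :=
  congr($(h.snd_mul_fst) x)

theorem fst_mul_adjoint_snd (h : IsKahlerTriple p q Λ) : p * adjoint q = -(adjoint q * p) := by
  have key : I • (adjoint q * p + p * adjoint q) = Λ * (p * p) - (p * p) * Λ := by
    rw [smul_add, ← smul_mul_assoc, ← mul_smul_comm, ← h.kahler_fst]; noncomm_ring
  rw [h.mul_self_fst, mul_zero, zero_mul, sub_zero, smul_eq_zero] at key
  exact eq_neg_of_add_eq_zero_right (key.resolve_left I_ne_zero)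

theorem laplacian_fst_eq_laplacian_snd (h : IsKahlerTriple p q Λ) : laplacian p = laplacian q := by
  have key : I • laplacian p - I • laplacian q = (p * q + q * p) * Λ - Λ * (p * q + q * p) := by
    have hp : I • adjoint p = q * Λ - Λ * q := by
      rw [← neg_neg (I • adjoint p), ← neg_smul, ← h.kahler_snd, neg_sub]
    rw [laplacian, laplacian, smul_add, smul_add, ← mul_smul_comm I p,
      ← smul_mul_assoc I (adjoint p), ← mul_smul_comm I q, ← smul_mul_assoc I (adjoint q), hp, ← h.kahler_fst]
    noncomm_ring
  rw [h.anticomm, zero_mul, mul_zero, sub_zero, sub_eq_zero] at key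
  exact smul_right_injective _ I_ne_zero key

theorem commute_laplacian_fst_mul_snd (h : IsKahlerTriple p q Λ) :
    Commute (laplacian q) (p * q) :=
  (h.laplacian_fst_eq_laplacian_snd ▸ commute_laplacian_self h.mul_self_fst).mul_right
    (commute_laplacian_self h.mul_self_snd)

theorem fst_mul_laplacian_snd (h : IsKahlerTriple p q Λ) :
    p * laplacian q = p * q * adjoint q - adjoint q * (p * q) := by
  rw [laplacian, mul_add, ← mul_assoc p (adjoint q) q, h.fst_mul_adjoint_snd]
  noncomm_ring

theorem range_fst_inf_ker_snd_le (h : IsKahlerTriple p q Λ) : range p ⊓ ker q ≤ range (p * q) := by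
  rintro _ ⟨⟨β, rfl⟩, hβ : q (p β) = 0⟩
  obtain ⟨β₀, hβ₀, y, rfl⟩ := (isSymmetric_laplacian q).exists_mem_ker_add_apply β
  have hqβ₀ : q β₀ = 0 := ((laplacian_apply_eq_zero_iff q β₀).1 hβ₀).1
  have hpβ₀ : p β₀ = 0 := by
    rw [mem_ker, ← h.laplacian_fst_eq_laplacian_snd, laplacian_apply_eq_zero_iff] at hβ₀
    exact hβ₀.1
  have hpqy : adjoint q (p (q y)) = 0 := by
    refine ((laplacian_apply_eq_zero_iff q _).1 ?_).2
    calc laplacian q (p (q y)) = p (q (β₀ + laplacian q y)) := by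
          rw [map_add q, hqβ₀, zero_add]; exact congr($(h.commute_laplacian_fst_mul_snd.eq) y)
      _ = 0 := by rw [← neg_eq_zero, ← h.snd_fst_apply, hβ]
  refine ⟨adjoint q y, ?_⟩
  calc (p * q) (adjoint q y) = (p * laplacian q) y := by
        rw [h.fst_mul_laplacian_snd, LinearMap.sub_apply]
        simp only [Module.End.mul_apply, hpqy, sub_zero]
    _ = p (β₀ + laplacian q y) := by rw [map_add, hpβ₀, zero_add]; rfl

theorem range_snd_mul_fst (h : IsKahlerTriple p q Λ) : range (q * p) = range (p * q) := by
  rw [h.snd_mul_fst, LinearMap.range_neg]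

theorem ker_inf_ker_inf_range_sup_range (h : IsKahlerTriple p q Λ) :
    ker p ⊓ ker q ⊓ (range p ⊔ range q) = range (p * q) := by
  apply le_antisymm
  · rintro x ⟨⟨hpx : p x = 0, hqx : q x = 0⟩, hx⟩
    obtain ⟨a, ha, b, hb, rfl⟩ := Submodule.mem_sup.1 hx
    have hqa : q a = 0 := by
      rwa [map_add, range_le_ker_iff.2 h.mul_self_snd hb, add_zero] at hqx
    have hpb : p b = 0 := by
      rwa [map_add, range_le_ker_iff.2 h.mul_self_fst ha, zero_add] at hpx
    exact add_mem (h.range_fst_inf_ker_snd_le ⟨ha, hqa⟩)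
      (h.range_snd_mul_fst ▸ h.swap.range_fst_inf_ker_snd_le ⟨hb, hpb⟩)
  · rintro _ ⟨u, rfl⟩
    refine ⟨⟨?_, ?_⟩, Submodule.mem_sup_left ⟨q u, rfl⟩⟩
    · exact range_le_ker_iff.2 h.mul_self_fst ⟨q u, rfl⟩
    · change q (p (q u)) = 0
      rw [h.snd_fst_apply, mem_ker.1 (range_le_ker_iff.2 h.mul_self_snd ⟨u, rfl⟩), map_zero,
        neg_zero]

end IsKahlerTriple

end Kahler

/-- Under the Kähler identities, the `∂∂̄`-Lemma holds:
`ker ∂ ∩ ker ∂̄ ∩ (im ∂ + im ∂̄) = im(∂∘∂̄)`.  In particular, if `∂x = 0`,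
`∂̄x = 0` and `x = ∂β + ∂̄γ`, then `x = ∂∂̄u` for some `u`. -/
theorem stmt16 {V : Type*} [NormedAddCommGroup V] [InnerProductSpace ℂ V]
    [FiniteDimensional ℂ V]
    (p q Lam : V →ₗ[ℂ] V)
    (hp : p ∘ₗ p = 0) (hq : q ∘ₗ q = 0) (hpq : p ∘ₗ q + q ∘ₗ p = 0)
    (hk1 : Lam ∘ₗ p - p ∘ₗ Lam = Complex.I • adjoint q)
    (hk2 : Lam ∘ₗ q - q ∘ₗ Lam = (-Complex.I) • adjoint p) :
    (ker p ⊓ ker q ⊓ (range p ⊔ range q) = range (p ∘ₗ q)) ∧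
    (∀ x β γ : V, p x = 0 → q x = 0 → x = p β + q γ → ∃ u : V, x = p (q u)) := by
  have hddbar := (IsKahlerTriple.mk hp hq hpq hk1 hk2).ker_inf_ker_inf_range_sup_range
  refine ⟨hddbar, fun x β γ hpx hqx hx => ?_⟩
  have hx_mem : x ∈ ker p ⊓ ker q ⊓ (range p ⊔ range q) :=
    ⟨⟨hpx, hqx⟩, hx ▸ Submodule.add_mem_sup ⟨β, rfl⟩ ⟨γ, rfl⟩⟩
  obtain ⟨u, hu⟩ := hddbar ▸ hx_mem
  exact ⟨u, hu.symm⟩
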